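/- arXiv:1009.1195 — 5 statements merged into one kernel-verified Lean document; each statement's English description precedes it below -/
import Mathlib

section
/- For every n ≥ 1, α(G^{⊠n}) ≤ R(G)^n, where R(G) is the minimal rank of a matrix over a field K fitting G. -/
/-- A matrix `M` over a field `K` *fits* a graph `G` if all diagonal entries are
nonzero and `M u v = 0` whenever `u ≠ v` are non-adjacent in `G`. -/
def Matrix.Fits {V K : Type*} [Fintype V] [Field K]
    (M : Matrix V V K) (G : SimpleGraph V) : Prop :=
  (∀ u, M u u ≠ 0) ∧ ∀ u v, u ≠ v → ¬ G.Adj u v → M u v = 0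

/-- The independence number of a finite simple graph. -/
noncomputable def SimpleGraph.indepNum' {V : Type*} [Fintype V] (G : SimpleGraph V) : ℕ :=
  sSup {n | ∃ s : Finset V, ((s : Set V).Pairwise fun u v => ¬ G.Adj u v) ∧ s.card = n}

/-- The `n`-fold strong power of a simple graph. -/
def SimpleGraph.strongPow {V : Type*} (G : SimpleGraph V) (n : ℕ) :
    SimpleGraph (Fin n → V) where
  Adj x y := x ≠ y ∧ ∀ i, x i = y i ∨ G.Adj (x i) (y i)
  symm := ⟨fun _ _ ⟨h, ha⟩ => ⟨h.symm, fun i => (ha i).imp Eq.symm SimpleGraph.Adj.symm⟩⟩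
  loopless := ⟨fun _ h => h.1 rfl⟩

/-- The Haemers bound: the minimum rank, over the field `K`, of a matrix fitting `G`. -/
noncomputable def haemersRank (K : Type*) [Field K] {V : Type*} [Fintype V]
    (G : SimpleGraph V) : ℕ :=
  sInf {r | ∃ M : Matrix V V K, M.Fits G ∧ M.rank = r}

/-!
A matrix `M` fitting `G` has a nonzero diagonal and vanishes between distinct non-adjacent
vertices, so on an independent set it restricts to an invertible diagonal matrix; hence
`α(G) ≤ rank M`. The Kronecker power `M^{⊗n}`, with entries `∏ i, M (x i) (y i)`, fits
`G^{⊠n}`, and factoring `M = A * B` through `Fin (rank M)` factors `M^{⊗n}` through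
`Fin n → Fin (rank M)`, so `rank M^{⊗n} ≤ (rank M)^n`.
-/

namespace Matrix

theorem exists_eq_mul_of_rank {m n K : Type*} [Fintype n] [Field K] (M : Matrix m n K) :
    ∃ (A : Matrix m (Fin M.rank) K) (B : Matrix (Fin M.rank) n K), M = A * B := by
  let W := LinearMap.range M.mulVecLin
  have hcol : ∀ v, M.col v ∈ W := fun v => by
    simp only [W, range_mulVecLin]
    exact Submodule.subset_span ⟨v, rfl⟩
  let c : Module.Basis (Fin M.rank) K W := Module.finBasis K W
  refine ⟨of fun u k => (c k : m → K) u, of fun k v => c.repr ⟨M.col v, hcol v⟩ k, ?_⟩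
  ext u v
  have hsum := congrArg (fun w : W => (w : m → K) u) (c.sum_repr ⟨M.col v, hcol v⟩)
  simp only [Submodule.coe_sum, Submodule.coe_smul, Finset.sum_apply, Pi.smul_apply,
    smul_eq_mul, col_apply] at hsum
  simpa only [mul_apply, of_apply, mul_comm] using hsum.symm

section KroneckerPow

variable {m n o R : Type*} (ι : Type*) [Fintype ι]

def kroneckerPow [CommMonoid R] (M : Matrix m n R) : Matrix (ι → m) (ι → n) R :=
  of fun x y => ∏ i, M (x i) (y i)

theorem kroneckerPow_apply [CommMonoid R] (M : Matrix m n R) (x : ι → m) (y : ι → n) :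
    M.kroneckerPow ι x y = ∏ i, M (x i) (y i) :=
  rfl

theorem kroneckerPow_mul [CommSemiring R] [DecidableEq ι] [Fintype n]
    (A : Matrix m n R) (B : Matrix n o R) :
    (A * B).kroneckerPow ι = A.kroneckerPow ι * B.kroneckerPow ι := by
  ext x y
  simp only [kroneckerPow_apply, mul_apply, Fintype.prod_sum, Finset.prod_mul_distrib]

theorem rank_kroneckerPow_le {K : Type*} [Fintype n] [Field K] [DecidableEq ι]
    (M : Matrix m n K) : (M.kroneckerPow ι).rank ≤ M.rank ^ Fintype.card ι := by
  obtain ⟨A, B, hAB⟩ := M.exists_eq_mul_of_rank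
  calc (M.kroneckerPow ι).rank = (A.kroneckerPow ι * B.kroneckerPow ι).rank := by
        conv_lhs => rw [hAB, kroneckerPow_mul]
    _ ≤ (A.kroneckerPow ι).rank := rank_mul_le_left _ _
    _ ≤ Fintype.card (ι → Fin M.rank) := rank_le_card_width _
    _ = M.rank ^ Fintype.card ι := by simp

end KroneckerPow

namespace Fits

variable {V K : Type*} [Fintype V] [Field K] {M : Matrix V V K} {G : SimpleGraph V}

theorem kroneckerPow (hM : M.Fits G) (n : ℕ) :
    (M.kroneckerPow (Fin n)).Fits (G.strongPow n) := by
  refine ⟨fun x => ?_, fun x y hxy hadj => ?_⟩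
  · rw [kroneckerPow_apply]
    exact Finset.prod_ne_zero_iff.2 fun i _ => hM.1 (x i)
  · obtain ⟨i, hne, hnadj⟩ : ∃ i, x i ≠ y i ∧ ¬ G.Adj (x i) (y i) := by
      by_contra! h
      exact hadj ⟨hxy, fun i => or_iff_not_imp_left.2 (h i)⟩
    rw [kroneckerPow_apply]
    exact Finset.prod_eq_zero (Finset.mem_univ i) (hM.2 _ _ hne hnadj)

theorem card_le_rank (hM : M.Fits G) {s : Finset V}
    (hs : (s : Set V).Pairwise fun u v => ¬ G.Adj u v) : s.card ≤ M.rank := by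
  classical
  have hdiag : M.submatrix ((↑) : s → V) (↑) = diagonal fun x : s => M x x := by
    ext x y
    by_cases hxy : x = y
    · subst hxy; simp
    · have hne : (x : V) ≠ y := Subtype.coe_injective.ne hxy
      simp [diagonal_apply_ne _ hxy, hM.2 _ _ hne (hs x.2 y.2 hne)]
  calc s.card = (M.submatrix ((↑) : s → V) ((↑) : s → V)).rank := by
        rw [hdiag, rank_diagonal,
          Fintype.card_congr (Equiv.subtypeUnivEquiv fun x : s => hM.1 x), Fintype.card_coe]
    _ ≤ M.rank := rank_submatrix_le _ _ _

theorem indepNum'_le_rank (hM : M.Fits G) : G.indepNum' ≤ M.rank :=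
  csSup_le' <| by
    rintro _ ⟨s, hs, rfl⟩
    exact hM.card_le_rank hs

end Fits

end Matrix

theorem exists_fits_rank_eq_haemersRank {V : Type*} [Fintype V] (K : Type*) [Field K]
    (G : SimpleGraph V) : ∃ M : Matrix V V K, M.Fits G ∧ M.rank = haemersRank K G := by
  classical
  have hone : (1 : Matrix V V K).Fits G :=
    ⟨fun _ => by simp, fun _ _ h _ => Matrix.one_apply_ne h⟩
  exact Nat.sInf_mem (s := {r | ∃ M : Matrix V V K, M.Fits G ∧ M.rank = r}) ⟨_, 1, hone, rfl⟩

theorem indepNum_strongPow_le_haemersRank_pow_general {V : Type*} [Fintype V]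
    (K : Type*) [Field K] (G : SimpleGraph V) (n : ℕ) :
    (G.strongPow n).indepNum' ≤ haemersRank K G ^ n := by
  obtain ⟨M, hM, hrank⟩ := exists_fits_rank_eq_haemersRank K G
  calc (G.strongPow n).indepNum' ≤ (M.kroneckerPow (Fin n)).rank :=
        (hM.kroneckerPow n).indepNum'_le_rank
    _ ≤ M.rank ^ n := by simpa using Matrix.rank_kroneckerPow_le (Fin n) M
    _ = haemersRank K G ^ n := by rw [hrank]

theorem indepNum_strongPow_le_haemersRank_pow {V : Type*} [Fintype V] [DecidableEq V]
    (K : Type*) [Field K] (G : SimpleGraph V) (n : ℕ) (hn : 1 ≤ n) :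
    (G.strongPow n).indepNum' ≤ haemersRank K G ^ n :=
  indepNum_strongPow_le_haemersRank_pow_general K G n
end

section
/- The symplectic graph Sp(2m, 𝔽₂) contains an independent set of size 2m + 1; consequently α(Sp(2m,𝔽₂)) ≥ 2m+1. -/
open Finset

/-- The canonical symplectic form `σ(u,v) = uᵀ [[0, Iₘ], [-Iₘ, 0]] v` on `𝔽₂^{2m}`,
with vectors written as pairs in `(𝔽₂^m) × (𝔽₂^m)`. -/
def sympForm (m : ℕ) (u v : (Fin m → ZMod 2) × (Fin m → ZMod 2)) : ZMod 2 :=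
  (∑ i, u.1 i * v.2 i) - ∑ i, u.2 i * v.1 i

/-- The symplectic graph `Sp(2m, 𝔽₂)`: vertices are the nonzero vectors of `𝔽₂^{2m}`,
with distinct vertices adjacent iff the symplectic form vanishes on them. -/
def sympGraph (m : ℕ) :
    SimpleGraph {v : (Fin m → ZMod 2) × (Fin m → ZMod 2) // v ≠ 0} where
  Adj u v := u ≠ v ∧ sympForm m u.1 v.1 = 0
  symm := by
    constructor
    rintro u v ⟨h, hs⟩
    refine ⟨h.symm, ?_⟩
    have h1 : ∀ f g : Fin m → ZMod 2, ∑ i, f i * g i = ∑ i, g i * f i :=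
      fun f g => Finset.sum_congr rfl fun i _ => mul_comm _ _
    unfold sympForm at hs ⊢
    rw [h1 v.1.1 u.1.2, h1 v.1.2 u.1.1]
    linear_combination -hs
  loopless := ⟨fun u h => h.1 rfl⟩

/-! Over `𝔽₂` it suffices to find `2m + 1` vectors on which the symplectic form is pairwise `1`:
the form is alternating, so such vectors are distinct, and for `m ≥ 1` none of them is `0`.
Writing `[a] ∈ 𝔽₂^m` for the indicator of the first `a` coordinates, the form of `([a], [b])` and
`([c], [d])` is the parity of `min a d + min b c` (truncated at `m`). The `2m + 1` pairs
`(0,1), (1,0), (1,2), (2,1), …, (m-1,m), (m,m-1), (m,m)` make all these sums odd. -/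

lemma sympForm_self (m : ℕ) (v : (Fin m → ZMod 2) × (Fin m → ZMod 2)) : sympForm m v v = 0 := by
  simp only [sympForm, mul_comm (v.1 _), sub_self]

lemma sympForm_zero_left (m : ℕ) (v : (Fin m → ZMod 2) × (Fin m → ZMod 2)) :
    sympForm m 0 v = 0 := by
  simp [sympForm]

def prefixIndicator (m a : ℕ) : Fin m → ZMod 2 := fun i => if (i : ℕ) < a then 1 else 0

lemma sum_prefixIndicator_mul (m a b : ℕ) :
    ∑ i, prefixIndicator m a i * prefixIndicator m b i = ((min (min a b) m : ℕ) : ZMod 2) := by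
  have hmul (i : Fin m) : prefixIndicator m a i * prefixIndicator m b i
      = if (i : ℕ) < min a b then 1 else 0 := by
    simp only [prefixIndicator, lt_min_iff, ite_zero_mul_ite_zero, mul_one]
  rw [sum_congr rfl fun i _ => hmul i, Fin.sum_univ_eq_sum_range
    (fun i => if i < min a b then (1 : ZMod 2) else 0), sum_boole]
  have hfilter : (range m).filter (· < min a b) = range (min (min a b) m) := by
    ext i
    simp only [mem_filter, mem_range]
    omega
  rw [hfilter, card_range]

lemma sympForm_prefixIndicator (m a b c d : ℕ) :
    sympForm m (prefixIndicator m a, prefixIndicator m b) (prefixIndicator m c, prefixIndicator m d)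
      = ((min (min a d) m + min (min b c) m : ℕ) : ZMod 2) := by
  rw [sympForm, sum_prefixIndicator_mul, sum_prefixIndicator_mul, CharTwo.sub_eq_add, Nat.cast_add]

def chainVec (m j : ℕ) : (Fin m → ZMod 2) × (Fin m → ZMod 2) :=
  (prefixIndicator m ((j + 1) / 2), prefixIndicator m (j / 2 + 1 - j % 2))

lemma sympForm_chainVec {m j l : ℕ} (hj : j ≤ 2 * m) (hl : l ≤ 2 * m) (hjl : j ≠ l) :
    sympForm m (chainVec m j) (chainVec m l) = 1 := by
  rw [chainVec, chainVec, sympForm_prefixIndicator, ZMod.natCast_eq_one_iff_odd, Nat.odd_iff]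
  omega

lemma exists_card_eq_pairwise_sympForm_eq_one (m : ℕ) :
    ∃ s : Finset ((Fin m → ZMod 2) × (Fin m → ZMod 2)),
      s.card = 2 * m + 1 ∧ (s : Set _).Pairwise fun u v => sympForm m u v = 1 := by
  have hform : ((range (2 * m + 1) : Set ℕ)).Pairwise fun j l =>
      sympForm m (chainVec m j) (chainVec m l) = 1 := fun j hj l hl hjl => by
    simp only [coe_range, Set.mem_Iio] at hj hl
    exact sympForm_chainVec (by omega) (by omega) hjl
  have hinj : Set.InjOn (chainVec m) (range (2 * m + 1)) := by
    intro j hj l hl hjl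
    by_contra hne
    have h : sympForm m (chainVec m j) (chainVec m l) = 1 := hform hj hl hne
    rw [hjl, sympForm_self] at h
    exact zero_ne_one h
  refine ⟨(range (2 * m + 1)).image (chainVec m), by rw [card_image_of_injOn hinj, card_range], ?_⟩
  rw [coe_image]
  exact hform.image

lemma ne_zero_of_pairwise_sympForm_eq_one {m : ℕ}
    {s : Finset ((Fin m → ZMod 2) × (Fin m → ZMod 2))}
    (hs : (s : Set _).Pairwise fun u v => sympForm m u v = 1) (hcard : 1 < s.card)
    {v : (Fin m → ZMod 2) × (Fin m → ZMod 2)} (hv : v ∈ s) : v ≠ 0 := by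
  obtain ⟨w, hw, hwv⟩ := exists_mem_ne hcard v
  rintro rfl
  have h : sympForm m 0 w = 1 := hs hv hw hwv.symm
  rw [sympForm_zero_left] at h
  exact zero_ne_one h

lemma sympGraph_isIndepSet_subtype {m : ℕ} {s : Finset ((Fin m → ZMod 2) × (Fin m → ZMod 2))}
    (hs : (s : Set _).Pairwise fun u v => sympForm m u v = 1) :
    (sympGraph m).IsIndepSet (s.subtype (· ≠ 0) : Set _) := by
  intro u hu v hv huv hadj
  rw [mem_coe, mem_subtype] at hu hv
  have h : sympForm m u v = 1 := hs hu hv (Subtype.coe_ne_coe.mpr huv)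
  rw [hadj.2] at h
  exact zero_ne_one h

lemma SimpleGraph.card_le_indepNum' {V : Type*} [Fintype V] {G : SimpleGraph V} {s : Finset V}
    (hs : G.IsIndepSet (s : Set V)) : s.card ≤ G.indepNum' :=
  le_csSup ⟨Fintype.card V, fun _ ⟨t, _, ht⟩ => ht ▸ card_le_univ t⟩ ⟨s, hs, rfl⟩

/-- `Sp(2m, 𝔽₂)` contains an independent set of size `2m + 1`; consequently
its independence number is at least `2m + 1`. -/
theorem sympGraph_indep_set (m : ℕ) (hm : 1 ≤ m) :
    (∃ s : Finset {v : (Fin m → ZMod 2) × (Fin m → ZMod 2) // v ≠ 0},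
      ((s : Set _).Pairwise fun u v => ¬ (sympGraph m).Adj u v) ∧ s.card = 2 * m + 1) ∧
    2 * m + 1 ≤ (sympGraph m).indepNum' := by
  obtain ⟨s, hcard, hs⟩ := exists_card_eq_pairwise_sympForm_eq_one m
  have hne : ∀ v ∈ s, v ≠ 0 := fun v =>
    ne_zero_of_pairwise_sympForm_eq_one hs (by omega)
  have hcard' : (s.subtype (· ≠ 0)).card = 2 * m + 1 := by
    rw [card_subtype, filter_true_of_mem hne, hcard]
  have hindep := sympGraph_isIndepSet_subtype hs
  exact ⟨⟨_, hindep, hcard'⟩, hcard' ▸ SimpleGraph.card_le_indepNum' hindep⟩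
end

section
/- The independence number of the symplectic graph Sp(2m, 𝔽₂) equals 2m + 1. -/
/-!
Vertices of an independent set pair to `1` under `σ`. If `u` is one of them, the others are
linearly independent: pairing a relation `∑ c_v v = 0` with `u` gives `∑ c_v = 0`, and pairing it
with `v` gives `∑ c_w - c_v = 0`, so every `c_v` vanishes. Hence there are at most `2m + 1` of them.

Conversely, write `𝔽₂^{2m}` as `m` hyperbolic planes `𝔽₂²` and let `staircase k a` be `0` in the
planes `j < k`, `a` in plane `k` and `(1, 1)` in the planes `j > k`. Two staircases pair only in
the plane of the larger index, so the `2m` staircases with `a ∈ {(1, 0), (0, 1)}` together with the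
all-ones vector `staircase 0 (1, 1)` pair to `1` with each other.
-/

open Finset

section AlternatingForm

variable {R V : Type*} [CommRing R] [AddCommGroup V] [Module R V]

theorem linearIndepOn_of_pairwise_bilinForm_eq_one {B : LinearMap.BilinForm R V} (hB : B.IsAlt)
    {t : Finset V} {u : V} (hu : ∀ v ∈ t, B u v = 1)
    (ht : (t : Set V).Pairwise fun v w => B v w = 1) :
    LinearIndepOn R id (t : Set V) := by
  classical
  rw [linearIndepOn_finset_iff]
  intro (g : V → R) hg x hx
  have hB_sum (y : V) : ∑ v ∈ t, g v * B y v = 0 := by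
    simpa [map_sum] using congrArg (B y) hg
  have hsum : ∑ v ∈ t, g v = 0 := by
    rw [← hB_sum u]
    exact sum_congr rfl fun v hv => by rw [hu v hv, mul_one]
  have hsum_erase : ∑ v ∈ t.erase x, g v = 0 := by
    rw [← hB_sum x, ← add_sum_erase t _ hx, hB x, mul_zero, zero_add]
    refine sum_congr rfl fun v hv => ?_
    rw [ht hx (mem_erase.1 hv).2 (ne_of_mem_erase hv).symm, mul_one]
  simpa [hsum_erase] using (add_sum_erase t g hx).trans hsum

theorem card_le_finrank_add_one_of_pairwise_bilinForm_eq_one [StrongRankCondition R]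
    [Module.Finite R V] {B : LinearMap.BilinForm R V} (hB : B.IsAlt) {s : Finset V}
    (hs : (s : Set V).Pairwise fun v w => B v w = 1) :
    s.card ≤ Module.finrank R V + 1 := by
  classical
  obtain rfl | ⟨u, hu⟩ := s.eq_empty_or_nonempty
  · simp
  have hind : LinearIndepOn R id (s.erase u : Set V) :=
    linearIndepOn_of_pairwise_bilinForm_eq_one hB
      (fun v hv => hs hu (mem_of_mem_erase hv) (ne_of_mem_erase hv).symm) (hs.mono (by simp))
  have := hind.finset_card_le_finrank
  rw [card_erase_of_mem hu] at this
  omega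

theorem injOn_of_pairwise_bilinForm_eq_one [Nontrivial R] {ι : Type*}
    {B : LinearMap.BilinForm R V} (hB : B.IsAlt) {f : ι → V} {S : Set ι}
    (hS : S.Pairwise fun i j => B (f i) (f j) = 1) :
    S.InjOn f := by
  intro i hi j hj hij
  by_contra hne
  simpa [hij, hB (f j)] using hS hi hj hne

end AlternatingForm

abbrev SympSpace (m : ℕ) : Type := (Fin m → ZMod 2) × (Fin m → ZMod 2)

def sympBilinForm (m : ℕ) : LinearMap.BilinForm (ZMod 2) (SympSpace m) :=
  LinearMap.mk₂ (ZMod 2) (sympForm m)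
    (fun u v w => by simp [sympForm, add_mul, sum_add_distrib]; ring)
    (fun c u v => by simp [sympForm, mul_assoc, ← mul_sum]; ring)
    (fun u v w => by simp [sympForm, mul_add, sum_add_distrib]; ring)
    (fun c u v => by simp [sympForm, mul_left_comm _ c, ← mul_sum]; ring)

theorem sympBilinForm_apply (m : ℕ) (u v : SympSpace m) : sympBilinForm m u v = sympForm m u v :=
  rfl

theorem sympBilinForm_isAlt (m : ℕ) : (sympBilinForm m).IsAlt := fun u => by
  simp [sympBilinForm_apply, sympForm, mul_comm]

theorem pairwise_not_adj_sympGraph_iff {m : ℕ} {t : Finset {v : SympSpace m // v ≠ 0}} :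
    (t : Set _).Pairwise (fun u v => ¬ (sympGraph m).Adj u v) ↔
      (t.map (Function.Embedding.subtype _) : Set (SympSpace m)).Pairwise
        fun u v => sympForm m u v = 1 := by
  rw [coe_map, Set.InjOn.pairwise_image (Function.Embedding.subtype _).injective.injOn]
  refine forall₂_congr fun u _ => forall₂_congr fun v _ => forall_congr' fun huv => ?_
  simp only [sympGraph, Function.onFun, huv, ne_eq, not_false_eq_true, true_and]
  exact (by decide : ∀ x : ZMod 2, ¬ x = 0 ↔ x = 1) _

theorem indepNum'_sympGraph_eq_sSup (m : ℕ) :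
    (sympGraph m).indepNum' = sSup {n | ∃ s : Finset (SympSpace m), 0 ∉ s ∧
      ((s : Set (SympSpace m)).Pairwise fun u v => sympForm m u v = 1) ∧ s.card = n} := by
  unfold SimpleGraph.indepNum'
  congr 1
  ext n
  constructor
  · rintro ⟨t, ht, rfl⟩
    exact ⟨_, by simp, pairwise_not_adj_sympGraph_iff.1 ht, card_map _⟩
  · rintro ⟨s, hs0, hs, rfl⟩
    have hmap : (s.subtype (· ≠ 0)).map (Function.Embedding.subtype _) = s :=
      subtype_map_of_mem fun v hv => ne_of_mem_of_not_mem hv hs0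
    refine ⟨s.subtype (· ≠ 0), pairwise_not_adj_sympGraph_iff.2 ?_, ?_⟩
    · rwa [hmap]
    · rw [← card_map, hmap]

def planeForm (a b : ZMod 2 × ZMod 2) : ZMod 2 := a.1 * b.2 - a.2 * b.1

theorem planeForm_eq_one {a b : ZMod 2 × ZMod 2} (ha : a ≠ 0) (hb : b ≠ 0) (hab : a ≠ b) :
    planeForm a b = 1 := by
  revert a b
  decide

@[simp] theorem planeForm_self (a : ZMod 2 × ZMod 2) : planeForm a a = 0 := by
  simp [planeForm, mul_comm]

@[simp] theorem planeForm_zero_left (a : ZMod 2 × ZMod 2) : planeForm 0 a = 0 := by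
  simp [planeForm]

@[simp] theorem planeForm_zero_right (a : ZMod 2 × ZMod 2) : planeForm a 0 = 0 := by
  simp [planeForm]

theorem sympForm_arrowProdEquivProdArrow {m : ℕ} (f g : Fin m → ZMod 2 × ZMod 2) :
    sympForm m (Equiv.arrowProdEquivProdArrow _ _ _ f) (Equiv.arrowProdEquivProdArrow _ _ _ g) =
      ∑ j, planeForm (f j) (g j) := by
  simp [sympForm, planeForm, sum_sub_distrib]

def staircase {m : ℕ} (k : Fin m) (a : ZMod 2 × ZMod 2) : SympSpace m :=
  Equiv.arrowProdEquivProdArrow _ _ _ fun j => if j < k then 0 else if j = k then a else 1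

theorem sympForm_staircase {m : ℕ} (k l : Fin m) (a b : ZMod 2 × ZMod 2) :
    sympForm m (staircase k a) (staircase l b) =
      if k < l then planeForm 1 b else if k = l then planeForm a b else planeForm a 1 := by
  rw [staircase, staircase, sympForm_arrowProdEquivProdArrow, sum_eq_single (max k l)]
  · rcases lt_trichotomy k l with h | rfl | h
    · simp [h, h.le, h.not_gt, h.ne']
    · simp
    · simp [h.le, h.not_gt, h.ne']
  · intro j _ hj
    rcases lt_or_gt_of_ne hj with h | h
    · rcases lt_max_iff.1 h with h | h <;> simp [h]
    · obtain ⟨hk, hl⟩ := max_lt_iff.1 h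
      simp [hk.not_gt, hk.ne', hl.not_gt, hl.ne']
  · simp

theorem staircase_ne_zero {m : ℕ} (k : Fin m) {a : ZMod 2 × ZMod 2} (ha : a ≠ 0) :
    staircase k a ≠ 0 := by
  intro h
  have hk := congrArg (fun v : SympSpace m => (v.1 k, v.2 k)) h
  exact ha (by simpa [staircase, Prod.zero_eq_mk] using hk)

def stairIndices (m : ℕ) [NeZero m] : Finset (Fin m × (ZMod 2 × ZMod 2)) :=
  insert (0, 1) (univ ×ˢ {(1, 0), (0, 1)})

section

variable {m : ℕ} [NeZero m]

theorem mem_stairIndices {p : Fin m × (ZMod 2 × ZMod 2)} :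
    p ∈ stairIndices m ↔ p.2 ≠ 0 ∧ (p.2 = 1 → p.1 = 0) := by
  obtain ⟨k, a⟩ := p
  have hne_zero : a ≠ 0 ↔ a = 1 ∨ a = (1, 0) ∨ a = (0, 1) := by revert a; decide
  by_cases h : a = 1
  · simp [stairIndices, h, Prod.ext_iff]
  · simp [stairIndices, h, hne_zero]

theorem card_stairIndices : (stairIndices m).card = 2 * m + 1 := by
  rw [stairIndices, card_insert_of_notMem (by simp [Prod.ext_iff]), card_product,
    card_pair (by decide)]
  simp [mul_comm]

theorem pairwise_sympForm_staircase_eq_one :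
    (stairIndices m : Set (Fin m × (ZMod 2 × ZMod 2))).Pairwise fun p q =>
      sympForm m (staircase p.1 p.2) (staircase q.1 q.2) = 1 := by
  rintro ⟨k, a⟩ hp ⟨l, b⟩ hq hpq
  obtain ⟨ha, ha1⟩ := mem_stairIndices.1 hp
  obtain ⟨hb, hb1⟩ := mem_stairIndices.1 hq
  dsimp only at ha ha1 hb hb1 ⊢
  rw [sympForm_staircase]
  split_ifs with hlt heq
  · refine planeForm_eq_one one_ne_zero hb fun h => ?_
    exact Fin.not_lt_zero k (hb1 h.symm ▸ hlt)
  · exact planeForm_eq_one ha hb fun h => hpq (by rw [heq, h])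
  · refine planeForm_eq_one ha one_ne_zero fun h => ?_
    exact Fin.not_lt_zero l (ha1 h ▸ lt_of_le_of_ne (not_lt.1 hlt) (Ne.symm heq))

theorem exists_pairwise_sympForm_eq_one :
    ∃ s : Finset (SympSpace m), 0 ∉ s ∧
      ((s : Set (SympSpace m)).Pairwise fun u v => sympForm m u v = 1) ∧ s.card = 2 * m + 1 := by
  classical
  have hinj : (stairIndices m : Set _).InjOn
      fun p : Fin m × (ZMod 2 × ZMod 2) => staircase p.1 p.2 :=
    injOn_of_pairwise_bilinForm_eq_one (sympBilinForm_isAlt m) pairwise_sympForm_staircase_eq_one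
  refine ⟨(stairIndices m).image fun p => staircase p.1 p.2, ?_, ?_, ?_⟩
  · simp only [mem_image, not_exists, not_and]
    exact fun p hp => staircase_ne_zero p.1 (mem_stairIndices.1 hp).1
  · rw [coe_image, hinj.pairwise_image]
    exact pairwise_sympForm_staircase_eq_one
  · rw [card_image_of_injOn hinj, card_stairIndices]

end

/-- The independence number of the symplectic graph `Sp(2m, 𝔽₂)` is `2m + 1`. -/
theorem indepNum_sympGraph (m : ℕ) (hm : 1 ≤ m) :
    (sympGraph m).indepNum' = 2 * m + 1 := by
  have : NeZero m := ⟨by omega⟩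
  rw [indepNum'_sympGraph_eq_sSup]
  refine IsGreatest.csSup_eq ⟨exists_pairwise_sympForm_eq_one, ?_⟩
  rintro n ⟨s, -, hs, rfl⟩
  simpa [Module.finrank_prod, two_mul] using
    card_le_finrank_add_one_of_pairwise_bilinForm_eq_one (sympBilinForm_isAlt m) hs
end

section
/- Let N = 16. For each a ∈ 𝔽_N^×, the set π_a = {(x, ax) : x ∈ 𝔽_N^×, Tr(ax²) = 1} has exactly 8 elements, and the 15 sets {π_a : a ∈ 𝔽_N^×} partition the set {(x,y) ∈ 𝔽_N² : Tr(xy) = 1}. -/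
/-!
A point `(x, y)` with `Tr (x * y) = 1` has `x, y ≠ 0`, so it lies on exactly one line `y = a * x`
with `a ≠ 0`, namely `a = y / x`. On that line `x ↦ a * x ^ 2` is a bijection of `𝔽₁₆`, squaring
being the Frobenius, so `|π_a|` is the number of `z` with `Tr z = 1`. Finally `Tr` is the
absolute trace `𝔽₁₆ → 𝔽₂`, which is additive and surjective, so both of its fibres have
`16 / 2 = 8` elements.
-/

open Finset

theorem FiniteField.card_filter_trace_eq_mul_card (F L : Type*) [Field F] [Field L] [Fintype F]
    [Fintype L] [Algebra F L] [DecidableEq F] (c : F) :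
    #{x : L | Algebra.trace F L x = c} * Fintype.card F = Fintype.card L := by
  have hfiber (c' : F) :
      #{x : L | Algebra.trace F L x = c'} = #{x : L | Algebra.trace F L x = c} :=
    AddMonoidHom.card_fiber_eq_of_mem_range (Algebra.trace F L).toAddMonoidHom
      (Algebra.trace_surjective F L c') (Algebra.trace_surjective F L c)
  calc #{x : L | Algebra.trace F L x = c} * Fintype.card F
      = ∑ c' : F, #{x : L | Algebra.trace F L x = c'} := by
        simp [hfiber, mul_comm]
    _ = Fintype.card L :=
        (card_eq_sum_card_fiberwise (fun x _ => mem_univ (Algebra.trace F L x))).symm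

theorem FiniteField.ncard_sum_pow_eq_one {K : Type*} [Field K] [Fintype K] {p n : ℕ}
    [hp : Fact p.Prime] [CharP K p] (hK : Fintype.card K = p ^ n) :
    {z : K | ∑ i ∈ range n, z ^ p ^ i = 1}.ncard = p ^ (n - 1) := by
  let _ := ZMod.algebra K p
  have hrank : Module.finrank (ZMod p) K = n := by
    refine Nat.pow_right_injective hp.out.two_le ?_
    simpa [hK] using (Module.card_eq_pow_finrank (K := ZMod p) (V := K)).symm
  have hn : n ≠ 0 := by
    rintro rfl
    exact (Fintype.one_lt_card (α := K)).ne' (by simpa using hK)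
  have hset : {z : K | ∑ i ∈ range n, z ^ p ^ i = 1} = {z | Algebra.trace (ZMod p) K z = 1} := by
    ext z
    have htrace := FiniteField.algebraMap_trace_eq_sum_pow (ZMod p) K z
    rw [hrank, Nat.card_zmod] at htrace
    rw [Set.mem_ofPred_eq, Set.mem_ofPred_eq, ← htrace, ← map_one (algebraMap (ZMod p) K),
      (algebraMap (ZMod p) K).injective.eq_iff]
  have hfiber := FiniteField.card_filter_trace_eq_mul_card (ZMod p) K 1
  rw [ZMod.card, hK, ← pow_sub_one_mul hn] at hfiber
  rw [hset, ← Nat.eq_of_mul_eq_mul_right hp.out.pos hfiber, ← Set.ncard_coe_finset, coe_filter]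
  simp

section
variable {K : Type*}

def linePoints [Mul K] [Pow K ℕ] [Zero K] (P : K → Prop) (a : K) : Set (K × K) :=
  {p | ∃ x : K, x ≠ 0 ∧ P (a * x ^ 2) ∧ p = (x, a * x)}

theorem disjoint_linePoints [MonoidWithZero K] [IsRightCancelMulZero K] (P : K → Prop)
    {a b : K} (hab : a ≠ b) :
    Disjoint (linePoints P a) (linePoints P b) := by
  rw [Set.disjoint_left]
  rintro _ ⟨x, hx, -, rfl⟩ ⟨y, -, -, hxy⟩
  obtain ⟨rfl, h⟩ := Prod.ext_iff.mp hxy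
  exact hab (mul_right_cancel₀ hx h)

theorem iUnion_linePoints [CommGroupWithZero K] {P : K → Prop} (hP : ¬P 0) :
    ⋃ a ∈ {a : K | a ≠ 0}, linePoints P a = {p : K × K | P (p.1 * p.2)} := by
  ext ⟨x, y⟩
  simp only [linePoints, Set.mem_iUnion, Set.mem_ofPred_eq, exists_prop]
  constructor
  · rintro ⟨a, -, z, -, hP, h⟩
    obtain ⟨rfl, rfl⟩ := Prod.mk_inj.mp h
    rwa [mul_left_comm, ← sq]
  · intro h
    have hx : x ≠ 0 := by rintro rfl; exact hP (by simpa using h)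
    have hy : y ≠ 0 := by rintro rfl; exact hP (by simpa using h)
    refine ⟨y / x, div_ne_zero hy hx, x, hx, ?_, ?_⟩
    · convert h using 1; field_simp
    · simp [div_mul_cancel₀ _ hx]

theorem ncard_linePoints [Field K] [CharP K 2] [PerfectRing K 2] {P : K → Prop} (hP : ¬P 0)
    {a : K} (ha : a ≠ 0) : (linePoints P a).ncard = {z | P z}.ncard := by
  have hsq : Function.Bijective (fun x : K => a * x ^ 2) :=
    (mulLeft_bijective₀ a ha).comp (bijective_frobenius K 2)
  have : linePoints P a = (fun x => (x, a * x)) '' ((fun x : K => a * x ^ 2) ⁻¹' {z | P z}) := by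
    ext p
    simp only [linePoints, Set.mem_image, Set.mem_preimage, Set.mem_ofPred_eq]
    constructor
    · rintro ⟨x, -, hx, rfl⟩; exact ⟨x, hx, rfl⟩
    · rintro ⟨x, hx, rfl⟩
      exact ⟨x, by rintro rfl; exact hP (by simpa using hx), hx, rfl⟩
  rw [this, Set.ncard_image_of_injective _ (fun x y h => (Prod.ext_iff.mp h).1),
    Set.ncard_preimage_of_injective_subset_range hsq.1 (by simp [hsq.2.range_eq])]
end

/-- Let `K = 𝔽₁₆` with trace `Tr(a) = a + a² + a⁴ + a⁸`. For each `a ≠ 0` the set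
`π_a = {(x, ax) : x ≠ 0, Tr(ax²) = 1}` has exactly `8` elements, and the `15` sets
`π_a` (for `a ≠ 0`) partition the set `{(x,y) : Tr(xy) = 1}`. -/
theorem E8_clique_partition (K : Type*) [Field K] [Fintype K]
    (hK : Fintype.card K = 16) :
    let tr : K → K := fun a => a + a ^ 2 + a ^ 4 + a ^ 8
    let π : K → Set (K × K) := fun a =>
      {p | ∃ x : K, x ≠ 0 ∧ tr (a * x ^ 2) = 1 ∧ p = (x, a * x)}
    (∀ a : K, a ≠ 0 → Nat.card (π a) = 8) ∧
    (∀ a b : K, a ≠ 0 → b ≠ 0 → a ≠ b → Disjoint (π a) (π b)) ∧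
    (⋃ a ∈ ({a : K | a ≠ 0}), π a) = {p : K × K | tr (p.1 * p.2) = 1} := by
  intro tr π
  have hK' : Fintype.card K = 2 ^ 4 := hK
  have : CharP K 2 := charP_of_card_eq_prime_pow hK'
  have htr0 : ¬tr 0 = 1 := by simp [tr]
  have hcard : {z : K | tr z = 1}.ncard = 8 := by
    simpa [sum_range_succ] using FiniteField.ncard_sum_pow_eq_one hK'
  refine ⟨fun a ha => ?_, fun a b _ _ hab => disjoint_linePoints (tr · = 1) hab,
    iUnion_linePoints (P := (tr · = 1)) htr0⟩
  rw [Nat.card_coe_set_eq, ← hcard]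
  exact ncard_linePoints (P := (tr · = 1)) htr0 ha
end

section
/- For odd n, the set of vectors {e_i ± e_j : 1 ≤ i < j ≤ n} ∪ {e_i : 1 ≤ i ≤ n} in ℝ^n can be partitioned into n sets π_1, …, π_n, where π_k = {e_i ± e_j : i < j, i + j ≡ 2k (mod n)} ∪ {e_k}, and each π_k consists of n pairwise orthogonal vectors. -/
open Finset

/-- The `i`-th standard basis vector of `ℝ^n`. -/
def stdB (n : ℕ) (i : Fin n) : Fin n → ℝ := fun j => if j = i then 1 else 0

/-- The vectors of the root system `B_n` (up to sign): `e_i ± e_j` for `i < j`,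
together with the `e_i`. -/
def BRoots (n : ℕ) : Set (Fin n → ℝ) :=
  {v | (∃ i j : Fin n, i < j ∧ (v = stdB n i + stdB n j ∨ v = stdB n i - stdB n j)) ∨
    ∃ i : Fin n, v = stdB n i}

/-- The cell `π_k` of the partition: the vectors `e_i ± e_j` with `i < j` and
`i + j ≡ 2k (mod n)`, together with `e_k`.  (Indices here are `0`-based, which is
equivalent to the `1`-based congruence `i + j ≡ 2k (mod n)`.) -/
def piB (n : ℕ) (k : Fin n) : Set (Fin n → ℝ) :=
  {v | (∃ i j : Fin n, i < j ∧ (i.1 + j.1) % n = (2 * k.1) % n ∧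
    (v = stdB n i + stdB n j ∨ v = stdB n i - stdB n j)) ∨ v = stdB n k}

namespace BnAux
variable {n : ℕ}

lemma dot_std (a b : Fin n) :
    ∑ i, stdB n a i * stdB n b i = if a = b then 1 else 0 := by
  have : ∀ i : Fin n, stdB n a i * stdB n b i = if i = a then (if a = b then 1 else 0) else 0 := by
    intro i
    simp only [stdB]
    split_ifs with h1 h2 h3 <;> simp_all
  rw [Finset.sum_congr rfl fun i _ => this i, Finset.sum_ite_eq']
  simp

lemma std_inj {a b : Fin n} (h : stdB n a = stdB n b) : a = b := by
  by_contra hne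
  have h1 := congrFun h a
  norm_num [stdB, hne] at h1

lemma std_ne_add {k a b : Fin n} (hab : a < b) : stdB n k ≠ stdB n a + stdB n b := by
  intro h
  have h1 := congrFun h a
  have h2 := congrFun h b
  have hak : a = k := by
    by_contra hak; norm_num [stdB, hab.ne, hak] at h1
  have hbk : b = k := by
    by_contra hbk; norm_num [stdB, hab.ne', hbk] at h2
  exact hab.ne (hak.trans hbk.symm)

lemma std_ne_sub {k a b : Fin n} (hab : a < b) : stdB n k ≠ stdB n a - stdB n b := by
  intro h
  have h1 := congrFun h b
  rcases eq_or_ne b k with h2 | h2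
  · norm_num [stdB, hab.ne', h2, h2 ▸ hab.ne'] at h1
  · norm_num [stdB, hab.ne', h2] at h1

lemma add_ne_sub {a b c d : Fin n} (hab : a < b) (hcd : c < d) :
    stdB n a + stdB n b ≠ stdB n c - stdB n d := by
  intro h
  have h1 := congrFun h d
  rcases eq_or_ne d a with h2 | h2 <;> rcases eq_or_ne d b with h3 | h3
  · exact hab.ne (h2.symm.trans h3)
  · have h5 : ¬(a = c) := by
      intro hc; rw [h2, hc] at hcd; exact lt_irrefl c hcd
    norm_num [stdB, hcd.ne', h2, hab.ne, h5] at h1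
  · have h5 : ¬(b = c) := by
      intro hc; rw [h3, hc] at hcd; exact lt_irrefl c hcd
    norm_num [stdB, hcd.ne', h3, hab.ne', h5] at h1
  · norm_num [stdB, hcd.ne', h2, h3] at h1

lemma add_inj {a b c d : Fin n} (hab : a < b) (hcd : c < d)
    (h : stdB n a + stdB n b = stdB n c + stdB n d) : a = c ∧ b = d := by
  have hac : a = c := by
    by_contra hac
    have had : a = d := by
      by_contra had
      have h1 := congrFun h a
      norm_num [stdB, hab.ne, hac, had] at h1
    have hca : c ≠ a := (had ▸ hcd).ne
    have hcb : c ≠ b := ((had ▸ hcd).trans hab).ne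
    have h2 := congrFun h c
    norm_num [stdB, hcd.ne, hca, hcb] at h2
  subst hac
  refine ⟨rfl, ?_⟩
  by_contra hbd
  have h2 := congrFun h b
  norm_num [stdB, hab.ne', hbd] at h2

lemma sub_inj {a b c d : Fin n} (hab : a < b) (hcd : c < d)
    (h : stdB n a - stdB n b = stdB n c - stdB n d) : a = c ∧ b = d := by
  have hac : a = c := by
    by_contra hac
    have h1 := congrFun h a
    rcases eq_or_ne a d with had | had
    · norm_num [stdB, hab.ne, hac, had, had ▸ hab.ne, hcd.ne'] at h1
    · norm_num [stdB, hab.ne, hac, had] at h1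
  subst hac
  refine ⟨rfl, ?_⟩
  by_contra hbd
  have h2 := congrFun h b
  norm_num [stdB, hab.ne', hbd] at h2

lemma two_unit (hn : Odd n) : IsUnit (2 : ZMod n) := by
  have := (ZMod.isUnit_iff_coprime 2 n).mpr (Nat.coprime_two_left.mpr hn)
  simpa using this

lemma cancel_two (hn : Odd n) {x y : ZMod n} (h : 2 * x = 2 * y) : x = y := by
  calc x = (2 : ZMod n)⁻¹ * (2 * x) := by
        rw [← mul_assoc, ZMod.inv_mul_of_unit _ (two_unit hn), one_mul]
    _ = (2 : ZMod n)⁻¹ * (2 * y) := by rw [h]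
    _ = y := by rw [← mul_assoc, ZMod.inv_mul_of_unit _ (two_unit hn), one_mul]

lemma mod_iff (a b : ℕ) : a % n = b % n ↔ ((a : ZMod n) = b) :=
  (ZMod.natCast_eq_natCast_iff a b n).symm

lemma fin_cast_inj [NeZero n] {a b : Fin n} (h : ((a.1 : ℕ) : ZMod n) = (b.1 : ℕ)) : a = b :=
  Fin.ext (by rw [← ZMod.val_cast_of_lt a.2, h, ZMod.val_cast_of_lt b.2])

def partner (n : ℕ) [NeZero n] (k i : Fin n) : Fin n :=
  ⟨(2 * (k.1 : ZMod n) - (i.1 : ZMod n)).val, ZMod.val_lt _⟩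

lemma partner_cast [NeZero n] (k i : Fin n) :
    (((partner n k i).1 : ℕ) : ZMod n) = 2 * (k.1 : ZMod n) - (i.1 : ZMod n) := by
  simp [partner, ZMod.natCast_val, ZMod.cast_id]

lemma partner_spec [NeZero n] (k i : Fin n) :
    ((i.1 : ℕ) : ZMod n) + ((partner n k i).1 : ZMod n) = 2 * (k.1 : ZMod n) := by
  rw [partner_cast]; ring

lemma partner_eq_self [NeZero n] (hn : Odd n) {k i : Fin n} :
    partner n k i = i ↔ i = k := by
  constructor
  · intro h
    have h2 : 2 * (k.1 : ZMod n) - (i.1 : ZMod n) = (i.1 : ZMod n) := by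
      rw [← partner_cast, h]
    have h3 : 2 * (k.1 : ZMod n) = 2 * (i.1 : ZMod n) := by
      rw [sub_eq_iff_eq_add] at h2; rw [h2]; ring
    exact (fin_cast_inj (cancel_two hn h3)).symm
  · rintro rfl
    exact fin_cast_inj (by rw [partner_cast]; ring)

lemma partner_eq_of [NeZero n] {k i j : Fin n}
    (h : ((i.1 : ℕ) : ZMod n) + (j.1 : ℕ) = 2 * (k.1 : ZMod n)) : partner n k i = j :=
  fin_cast_inj (by rw [partner_cast, ← h]; ring)

lemma mem_cond_iff (i j k : Fin n) :
    (i.1 + j.1) % n = (2 * k.1) % n ↔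
      ((i.1 : ℕ) : ZMod n) + ((j.1 : ℕ) : ZMod n) = 2 * ((k.1 : ℕ) : ZMod n) := by
  rw [mod_iff]
  push_cast
  rfl

noncomputable def cellMap (n : ℕ) [NeZero n] (k i : Fin n) : Fin n → ℝ :=
  if i = k then stdB n k
  else if i < partner n k i then stdB n i + stdB n (partner n k i)
  else stdB n (partner n k i) - stdB n i

lemma cellMap_inj [NeZero n] (hn : Odd n) (k : Fin n) : Function.Injective (cellMap n k) := by
  intro i j h
  simp only [cellMap] at h
  by_cases hik : i = k <;> by_cases hjk : j = k
  · rw [hik, hjk]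
  · exfalso
    rw [if_pos hik, if_neg hjk] at h
    have hj' : partner n k j ≠ j := fun hh => hjk ((partner_eq_self hn).mp hh)
    by_cases hlt : j < partner n k j
    · rw [if_pos hlt] at h; exact std_ne_add hlt h
    · rw [if_neg hlt] at h
      exact std_ne_sub (lt_of_le_of_ne (not_lt.mp hlt) hj') h
  · exfalso
    rw [if_neg hik, if_pos hjk] at h
    have hi' : partner n k i ≠ i := fun hh => hik ((partner_eq_self hn).mp hh)
    by_cases hlt : i < partner n k i
    · rw [if_pos hlt] at h; exact std_ne_add hlt h.symm
    · rw [if_neg hlt] at h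
      exact std_ne_sub (lt_of_le_of_ne (not_lt.mp hlt) hi') h.symm
  · rw [if_neg hik, if_neg hjk] at h
    have hi' : partner n k i ≠ i := fun hh => hik ((partner_eq_self hn).mp hh)
    have hj' : partner n k j ≠ j := fun hh => hjk ((partner_eq_self hn).mp hh)
    by_cases hlt1 : i < partner n k i <;> by_cases hlt2 : j < partner n k j
    · rw [if_pos hlt1, if_pos hlt2] at h; exact (add_inj hlt1 hlt2 h).1
    · rw [if_pos hlt1, if_neg hlt2] at h
      exact absurd h (add_ne_sub hlt1 (lt_of_le_of_ne (not_lt.mp hlt2) hj'))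
    · rw [if_neg hlt1, if_pos hlt2] at h
      exact absurd h.symm (add_ne_sub hlt2 (lt_of_le_of_ne (not_lt.mp hlt1) hi'))
    · rw [if_neg hlt1, if_neg hlt2] at h
      exact (sub_inj (lt_of_le_of_ne (not_lt.mp hlt1) hi')
        (lt_of_le_of_ne (not_lt.mp hlt2) hj') h).2

lemma range_cellMap [NeZero n] (hn : Odd n) (k : Fin n) :
    Set.range (cellMap n k) = piB n k := by
  ext v
  constructor
  · rintro ⟨i, rfl⟩
    simp only [cellMap]
    split_ifs with h1 h2
    · exact Or.inr rfl
    · exact Or.inl ⟨i, partner n k i, h2,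
        (mem_cond_iff i (partner n k i) k).mpr (partner_spec k i), Or.inl rfl⟩
    · have hi' : partner n k i ≠ i := fun hh => h1 ((partner_eq_self hn).mp hh)
      have hlt : partner n k i < i := lt_of_le_of_ne (not_lt.mp h2) hi'
      exact Or.inl ⟨partner n k i, i, hlt,
        (mem_cond_iff _ i k).mpr (by rw [add_comm]; exact partner_spec k i), Or.inr rfl⟩
  · rintro (⟨i, j, hij, hmod, (rfl | rfl)⟩ | rfl)
    · have hz := (mem_cond_iff i j k).mp hmod
      have hik : i ≠ k := by
        intro h0
        have hp1 : partner n k i = j := partner_eq_of hz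
        have hp2 : partner n k i = i := (partner_eq_self hn).mpr h0
        exact hij.ne' (hp1.symm.trans hp2)
      refine ⟨i, ?_⟩
      simp only [cellMap, if_neg hik]
      rw [partner_eq_of hz, if_pos hij]
    · have hz := (mem_cond_iff i j k).mp hmod
      have hz' : ((j.1 : ℕ) : ZMod n) + ((i.1 : ℕ) : ZMod n) = 2 * ((k.1 : ℕ) : ZMod n) := by
        rw [add_comm]; exact hz
      have hjk : j ≠ k := by
        intro h0
        have hp1 : partner n k j = i := partner_eq_of hz'
        have hp2 : partner n k j = j := (partner_eq_self hn).mpr h0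
        exact hij.ne (hp1.symm.trans hp2)
      refine ⟨j, ?_⟩
      simp only [cellMap, if_neg hjk]
      rw [partner_eq_of hz', if_neg (not_lt.mpr hij.le)]
    · exact ⟨k, by simp [cellMap]⟩

lemma card_piB [NeZero n] (hn : Odd n) (k : Fin n) : Nat.card (piB n k) = n := by
  rw [← range_cellMap hn k, Nat.card_range_of_injective (cellMap_inj hn k),
    Nat.card_eq_fintype_card, Fintype.card_fin]

lemma pair_cases [NeZero n] (hn : Odd n) {k a b c d : Fin n} (hab : a < b) (hcd : c < d)
    (h1 : ((a.1 : ℕ) : ZMod n) + ((b.1 : ℕ) : ZMod n) = 2 * ((k.1 : ℕ) : ZMod n))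
    (h2 : ((c.1 : ℕ) : ZMod n) + ((d.1 : ℕ) : ZMod n) = 2 * ((k.1 : ℕ) : ZMod n)) :
    (a = c ∧ b = d) ∨ (a ≠ c ∧ a ≠ d ∧ b ≠ c ∧ b ≠ d) := by
  have hsum := h1.trans h2.symm
  by_cases hac : a = c
  · left
    refine ⟨hac, fin_cast_inj ?_⟩
    rw [hac] at hsum
    exact add_left_cancel hsum
  · right
    refine ⟨hac, ?_, ?_, ?_⟩
    · intro had
      have hbc : b = c := fin_cast_inj (by rw [had] at hsum; linear_combination hsum)
      rw [← had] at hcd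
      rw [hbc] at hab
      exact lt_irrefl c (hcd.trans hab)
    · intro hbc
      have had : a = d := fin_cast_inj (by rw [hbc] at hsum; linear_combination hsum)
      rw [← hbc, ← had] at hcd
      exact lt_irrefl a (hab.trans hcd)
    · intro hbd
      have : a = c := fin_cast_inj (by rw [hbd] at hsum; linear_combination hsum)
      exact hac this

lemma pair_ne_k [NeZero n] (hn : Odd n) {k a b : Fin n} (hab : a < b)
    (h1 : ((a.1 : ℕ) : ZMod n) + ((b.1 : ℕ) : ZMod n) = 2 * ((k.1 : ℕ) : ZMod n)) :
    a ≠ k ∧ b ≠ k := by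
  constructor
  · intro h0
    rw [h0] at h1 hab
    have hbk : b = k := fin_cast_inj (by linear_combination h1)
    exact hab.ne' hbk
  · intro h0
    rw [h0] at h1 hab
    have hak : a = k := fin_cast_inj (by linear_combination h1)
    exact hab.ne hak

end BnAux

open BnAux in
/-- For odd `n`, the root system `B_n` is partitioned into the `n` cells `π_k`,
each consisting of `n` pairwise orthogonal vectors. -/
theorem Bn_partition_into_orthogonal_cells (n : ℕ) (hn : Odd n) :
    (⋃ k, piB n k) = BRoots n ∧
    (∀ k l : Fin n, k ≠ l → Disjoint (piB n k) (piB n l)) ∧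
    (∀ k : Fin n, Nat.card (piB n k) = n) ∧
    (∀ k : Fin n, ∀ u ∈ piB n k, ∀ v ∈ piB n k, u ≠ v → ∑ i, u i * v i = 0) := by
  have hn0 : n ≠ 0 := by
    have := Nat.odd_iff.mp hn; omega
  haveI : NeZero n := ⟨hn0⟩
  refine ⟨?_, ?_, fun k => card_piB hn k, ?_⟩
  · -- union
    ext v
    simp only [Set.mem_iUnion]
    constructor
    · rintro ⟨k, (⟨i, j, hij, _, hv⟩ | rfl)⟩
      · exact Or.inl ⟨i, j, hij, hv⟩
      · exact Or.inr ⟨k, rfl⟩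
    · rintro (⟨i, j, hij, hv⟩ | ⟨i, rfl⟩)
      · refine ⟨⟨(((((i.1 : ℕ) : ZMod n)) + ((j.1 : ℕ) : ZMod n)) * (2 : ZMod n)⁻¹).val,
          ZMod.val_lt _⟩, Or.inl ⟨i, j, hij, ?_, hv⟩⟩
        rw [mem_cond_iff]
        have hx : ((((((i.1 : ℕ) : ZMod n)) + ((j.1 : ℕ) : ZMod n)) * (2 : ZMod n)⁻¹).val : ZMod n)
            = ((((i.1 : ℕ) : ZMod n)) + ((j.1 : ℕ) : ZMod n)) * (2 : ZMod n)⁻¹ :=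
          ZMod.natCast_rightInverse _
        show _ = 2 * ((((((i.1 : ℕ) : ZMod n)) + ((j.1 : ℕ) : ZMod n)) * (2 : ZMod n)⁻¹).val : ZMod n)
        rw [hx, mul_comm (2 : ZMod n), mul_assoc, ZMod.inv_mul_of_unit _ (two_unit hn), mul_one]
      · exact ⟨i, Or.inr rfl⟩
  · -- disjoint
    intro k l hkl
    rw [Set.disjoint_left]
    rintro v hvk hvl
    rcases hvk with ⟨a, b, hab, hm1, hv1⟩ | rfl <;>
      rcases hvl with ⟨c, d, hcd, hm2, hv2⟩ | hv2
    · -- pair / pair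
      have z1 := (mem_cond_iff a b k).mp hm1
      have z2 := (mem_cond_iff c d l).mp hm2
      have habcd : a = c ∧ b = d := by
        rcases hv1 with rfl | rfl <;> rcases hv2 with h | h
        · exact add_inj hab hcd h
        · exact absurd h (add_ne_sub hab hcd)
        · exact absurd h.symm (add_ne_sub hcd hab)
        · exact sub_inj hab hcd h
      obtain ⟨rfl, rfl⟩ := habcd
      exact hkl (fin_cast_inj (cancel_two hn (z1.symm.trans z2)))
    · rcases hv1 with rfl | rfl
      · exact std_ne_add hab hv2.symm
      · exact std_ne_sub hab hv2.symm
    · rcases hv2 with h | h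
      · exact std_ne_add hcd h
      · exact std_ne_sub hcd h
    · exact hkl (std_inj hv2)
  · -- orthogonality
    intro k u hu v hv huv
    rcases hu with ⟨a, b, hab, hm1, hu'⟩ | rfl <;>
      rcases hv with ⟨c, d, hcd, hm2, hv'⟩ | hv'
    · have z1 := (mem_cond_iff a b k).mp hm1
      have z2 := (mem_cond_iff c d k).mp hm2
      rcases pair_cases hn hab hcd z1 z2 with ⟨rfl, rfl⟩ | ⟨h1, h2, h3, h4⟩
      · rcases hu' with rfl | rfl <;> rcases hv' with rfl | rfl
        · exact absurd rfl huv
        · simp only [Pi.add_apply, Pi.sub_apply, add_mul, mul_sub,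
            Finset.sum_add_distrib, Finset.sum_sub_distrib, dot_std]
          simp [hab.ne, hab.ne']
        · simp only [Pi.add_apply, Pi.sub_apply, sub_mul, mul_add,
            Finset.sum_add_distrib, Finset.sum_sub_distrib, dot_std]
          simp [hab.ne, hab.ne']
        · exact absurd rfl huv
      · rcases hu' with rfl | rfl <;> rcases hv' with rfl | rfl <;>
          · simp only [Pi.add_apply, Pi.sub_apply, add_mul, sub_mul, mul_add, mul_sub,
              Finset.sum_add_distrib, Finset.sum_sub_distrib, dot_std]
            simp [h1, h2, h3, h4]
    · -- pair vs e_k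
      subst hv'
      have z1 := (mem_cond_iff a b k).mp hm1
      obtain ⟨hak, hbk⟩ := pair_ne_k hn hab z1
      rcases hu' with rfl | rfl <;>
        · simp only [Pi.add_apply, Pi.sub_apply, add_mul, sub_mul,
            Finset.sum_add_distrib, Finset.sum_sub_distrib, dot_std]
          simp [hak, hbk]
    · -- e_k vs pair
      have z2 := (mem_cond_iff c d k).mp hm2
      obtain ⟨hck, hdk⟩ := pair_ne_k hn hcd z2
      rcases hv' with rfl | rfl <;>
        · simp only [Pi.add_apply, Pi.sub_apply, mul_add, mul_sub,
            Finset.sum_add_distrib, Finset.sum_sub_distrib, dot_std]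
          simp [Ne.symm hck, Ne.symm hdk]
    · exact absurd hv'.symm huv
end
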